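/- arXiv:2005.02204 — 4 statements merged into one kernel-verified Lean document; each statement's English description precedes it below -/
import Mathlib

section
/- Let F(x1,x2) = H(x1,x2) + f(x1) + g(x2) on ℝ^{d1} × ℝ^{d2}, where H is continuously differentiable and f : ℝ^{d1} → (−∞,∞], g : ℝ^{d2} → (−∞,∞] are proper and lower semicontinuous. Let τ1, τ2 > 0. If x1 is a minimizer of y ↦ (τ1/2)‖(x1 − (1/τ1)∇_{x1}H(x1,x2)) − y‖² + f(y) and x2 is a minimizer of y ↦ (τ2/2)‖(x2 − (1/τ2)∇_{x2}H(x1,x2)) − y‖² + g(y), then (x1,x2) is a critical point of F, i.e., 0 ∈ ∂F(x1,x2), where ∂F is the general (limiting) subdifferential of F. -/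
open Filter Topology

/-- `v` is a regular subgradient of `f` at `xb`. -/
def RegSubgrad {E : Type*} [NormedAddCommGroup E] [InnerProductSpace ℝ E]
    (f : E → EReal) (xb v : E) : Prop :=
  ∀ ε : ℝ, 0 < ε → ∀ᶠ x in nhds xb,
    f xb + (((inner ℝ v (x - xb) : ℝ) - ε * ‖x - xb‖ : ℝ) : EReal) ≤ f x

/-- `v` is a general (limiting) subgradient of `f` at `xb`. -/
def GenSubgrad {E : Type*} [NormedAddCommGroup E] [InnerProductSpace ℝ E]
    (f : E → EReal) (xb v : E) : Prop :=
  ∃ xs : ℕ → E, ∃ vs : ℕ → E,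
    Tendsto xs atTop (nhds xb) ∧ Tendsto vs atTop (nhds v) ∧
    ∀ k, RegSubgrad f (xs k) (vs k)

/-- the point of `WithLp 2 (E₁ × E₂)` with components `a`, `b`. -/
noncomputable def prodMk {A B : Type*} (a : A) (b : B) : WithLp 2 (A × B) :=
  (WithLp.equiv 2 (A × B)).symm (a, b)

/-! The prox optimality condition at `xᵢ` is a global proximal-subgradient inequality for `f`
(resp. `g`) with vector `-∇_{xᵢ}H`; its quadratic error term is `o(‖y - xᵢ‖)`, so `-∇_{xᵢ}H` is a
regular subgradient. Regular subgradients of the separable sum `f(p.1) + g(p.2)` contain the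
pairs of regular subgradients, and adding the smooth `H` shifts them by
`∇H = (∇_{x1}H, ∇_{x2}H)`. Hence `0` is a regular, and a fortiori limiting, subgradient of `F`. -/

open scoped RealInnerProductSpace

/-- Unlike Rockafellar–Wets (8.45), the inequality is required for all `y`, not only near `x`. -/
def ProxSubgrad {E : Type*} [NormedAddCommGroup E] [InnerProductSpace ℝ E]
    (f : E → EReal) (x v : E) (c : ℝ) : Prop :=
  ∀ y, f x + ((⟪v, y - x⟫ - c * ‖y - x‖ ^ 2 : ℝ) : EReal) ≤ f y

theorem EReal.add_add_coe_le_add {A B A' B' : EReal} {a b c : ℝ}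
    (hA : A + a ≤ A') (hB : B + b ≤ B') (hc : c ≤ a + b) : A + B + c ≤ A' + B' :=
  calc A + B + c ≤ A + B + ((a + b : ℝ) : EReal) := by gcongr
    _ = (A + a) + (B + b) := by rw [EReal.coe_add]; abel
    _ ≤ A' + B' := add_le_add hA hB

section Subgradients

variable {E : Type*} [NormedAddCommGroup E] [InnerProductSpace ℝ E]

theorem RegSubgrad.genSubgrad {f : E → EReal} {x v : E} (h : RegSubgrad f x v) :
    GenSubgrad f x v :=
  ⟨fun _ => x, fun _ => v, tendsto_const_nhds, tendsto_const_nhds, fun _ => h⟩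

theorem ProxSubgrad.regSubgrad {f : E → EReal} {x v : E} {c : ℝ} (h : ProxSubgrad f x v c) :
    RegSubgrad f x v := by
  intro ε hε
  have hsmall : ∀ᶠ y in 𝓝 x, c * ‖y - x‖ < ε := by
    have : Tendsto (fun y => c * ‖y - x‖) (𝓝 x) (𝓝 (c * 0)) :=
      (tendsto_norm_sub_self x).const_mul c
    exact this.eventually_lt_const (by simpa using hε)
  filter_upwards [hsmall] with y hy
  refine le_trans (add_le_add le_rfl (EReal.coe_le_coe_iff.2 ?_)) (h y)
  linarith [mul_le_mul_of_nonneg_right hy.le (norm_nonneg (y - x))]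

theorem proxSubgrad_of_forall_prox_le {f : E → EReal} {τ : ℝ} (hτ : τ ≠ 0) {x v : E}
    (hmin : ∀ y, ((τ / 2 * ‖(x - τ⁻¹ • v) - x‖ ^ 2 : ℝ) : EReal) + f x ≤
        ((τ / 2 * ‖(x - τ⁻¹ • v) - y‖ ^ 2 : ℝ) : EReal) + f y) :
    ProxSubgrad f x (-v) (τ / 2) := by
  intro y
  have hid : (⟪-v, y - x⟫ - τ / 2 * ‖y - x‖ ^ 2) + τ / 2 * ‖(x - τ⁻¹ • v) - y‖ ^ 2
      = τ / 2 * ‖(x - τ⁻¹ • v) - x‖ ^ 2 := by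
    rw [show x - τ⁻¹ • v - y = -(τ⁻¹ • v) - (y - x) by abel, sub_sub_cancel_left,
      norm_sub_sq_real (-(τ⁻¹ • v)), norm_neg, inner_neg_left, inner_neg_left, real_inner_smul_left]
    field_simp
    ring
  rw [← (EReal.addLECancellable_coe _).add_le_add_iff_right, add_assoc, ← EReal.coe_add, hid,
    add_comm (f x), add_comm (f y)]
  exact hmin y

theorem RegSubgrad.coe_add_of_hasGradientAt [CompleteSpace E] {h : E → ℝ} {φ : E → EReal}
    {x u v : E} (hh : HasGradientAt h u x) (hφ : RegSubgrad φ x v) :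
    RegSubgrad (fun y => (h y : EReal) + φ y) x (u + v) := by
  intro ε hε
  filter_upwards [hh.hasFDerivAt.isLittleO.def (half_pos hε), hφ (ε / 2) (half_pos hε)]
    with y hhy hφy
  refine EReal.add_add_coe_le_add (a := ⟪u, y - x⟫ - ε / 2 * ‖y - x‖) ?_ hφy ?_
  · rw [← EReal.coe_add, EReal.coe_le_coe_iff]
    rw [InnerProductSpace.toDual_apply_apply, Real.norm_eq_abs] at hhy
    linarith [neg_abs_le (h y - h x - ⟪u, y - x⟫)]
  · rw [inner_add_left]; linarith

end Subgradients

theorem prodMk_neg {A B : Type*} [AddCommGroup A] [AddCommGroup B] (a : A) (b : B) :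
    prodMk (-a) (-b) = -prodMk a b :=
  rfl

section Product

variable {E1 E2 : Type*} [NormedAddCommGroup E1] [InnerProductSpace ℝ E1]
  [NormedAddCommGroup E2] [InnerProductSpace ℝ E2]

theorem RegSubgrad.prod {f : E1 → EReal} {g : E2 → EReal} {x1 v1 : E1} {x2 v2 : E2}
    (hf : RegSubgrad f x1 v1) (hg : RegSubgrad g x2 v2) :
    RegSubgrad (fun p : WithLp 2 (E1 × E2) => f p.fst + g p.snd) (prodMk x1 x2)
      (prodMk v1 v2) := by
  intro ε hε
  have hf' := ((WithLp.continuous_fst 2 E1 E2).tendsto (prodMk x1 x2)).eventually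
    (hf (ε / 2) (half_pos hε))
  have hg' := ((WithLp.continuous_snd 2 E1 E2).tendsto (prodMk x1 x2)).eventually
    (hg (ε / 2) (half_pos hε))
  filter_upwards [hf', hg'] with p hfp hgp
  refine EReal.add_add_coe_le_add hfp hgp ?_
  have h1 : ‖p.fst - x1‖ ≤ ‖p - prodMk x1 x2‖ := WithLp.norm_fst_le E1 (p - prodMk x1 x2)
  have h2 : ‖p.snd - x2‖ ≤ ‖p - prodMk x1 x2‖ := WithLp.norm_snd_le E1 (p - prodMk x1 x2)
  change ⟪v1, p.fst - x1⟫ + ⟪v2, p.snd - x2⟫ - ε * ‖p - prodMk x1 x2‖ ≤ _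
  linarith [mul_le_mul_of_nonneg_left h1 hε.le, mul_le_mul_of_nonneg_left h2 hε.le]

variable {H : WithLp 2 (E1 × E2) → ℝ}
  {D : WithLp 2 (E1 × E2) →L[ℝ] ℝ} {x1 : E1} {x2 : E2}

theorem inner_gradient_comp_prodMk_left [CompleteSpace E1]
    (hH : HasFDerivAt H D (prodMk x1 x2)) (w : E1) :
    ⟪gradient (fun a => H (prodMk a x2)) x1, w⟫ = D (prodMk w 0) := by
  have hφ : HasFDerivAt (fun a => H (prodMk a x2))
      (D.comp ((WithLp.prodContinuousLinearEquiv 2 ℝ E1 E2).symm.toContinuousLinearMap.comp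
        (.inl ℝ E1 E2))) x1 :=
    hH.comp x1 <| (WithLp.prodContinuousLinearEquiv 2 ℝ E1 E2).symm.hasFDerivAt.comp x1
      (hasFDerivAt_prodMk_left x1 x2)
  rw [hφ.hasGradientAt.gradient, InnerProductSpace.toDual_symm_apply]
  rfl

theorem inner_gradient_comp_prodMk_right [CompleteSpace E2]
    (hH : HasFDerivAt H D (prodMk x1 x2)) (w : E2) :
    ⟪gradient (fun b => H (prodMk x1 b)) x2, w⟫ = D (prodMk 0 w) := by
  have hφ : HasFDerivAt (fun b => H (prodMk x1 b))
      (D.comp ((WithLp.prodContinuousLinearEquiv 2 ℝ E1 E2).symm.toContinuousLinearMap.comp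
        (.inr ℝ E1 E2))) x2 :=
    hH.comp x2 <| (WithLp.prodContinuousLinearEquiv 2 ℝ E1 E2).symm.hasFDerivAt.comp x2
      (hasFDerivAt_prodMk_right x1 x2)
  rw [hφ.hasGradientAt.gradient, InnerProductSpace.toDual_symm_apply]
  rfl

theorem hasGradientAt_prodMk_partialGradients [CompleteSpace E1] [CompleteSpace E2]
    (hH : HasFDerivAt H D (prodMk x1 x2)) :
    HasGradientAt H
      (prodMk (gradient (fun a => H (prodMk a x2)) x1) (gradient (fun b => H (prodMk x1 b)) x2))
      (prodMk x1 x2) := by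
  suffices hD : InnerProductSpace.toDual ℝ _ (prodMk (gradient (fun a => H (prodMk a x2)) x1)
      (gradient (fun b => H (prodMk x1 b)) x2)) = D by
    rwa [hasGradientAt_iff_hasFDerivAt, hD]
  ext u
  have hu : u = prodMk u.fst 0 + prodMk 0 u.snd :=
    (WithLp.ext_iff 2).2 <| Prod.ext (add_zero _).symm (zero_add _).symm
  change ⟪gradient (fun a => H (prodMk a x2)) x1, u.fst⟫
      + ⟪gradient (fun b => H (prodMk x1 b)) x2, u.snd⟫ = D u
  rw [inner_gradient_comp_prodMk_left hH, inner_gradient_comp_prodMk_right hH, ← map_add, ← hu]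

end Product

theorem generalized_gradient_zero_critical_point_general (d1 d2 : ℕ)
    (H : WithLp 2 (EuclideanSpace ℝ (Fin d1) × EuclideanSpace ℝ (Fin d2)) → ℝ)
    (hH : ContDiff ℝ 1 H)
    (f : EuclideanSpace ℝ (Fin d1) → EReal)
    (g : EuclideanSpace ℝ (Fin d2) → EReal)
    (τ1 τ2 : ℝ) (hτ1 : 0 < τ1) (hτ2 : 0 < τ2)
    (x1 : EuclideanSpace ℝ (Fin d1)) (x2 : EuclideanSpace ℝ (Fin d2))
    (hmin1 : ∀ y : EuclideanSpace ℝ (Fin d1),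
      ((τ1 / 2 * ‖(x1 - τ1⁻¹ • gradient (fun a => H (prodMk a x2)) x1) - x1‖ ^ 2 : ℝ) : EReal)
          + f x1 ≤
        ((τ1 / 2 * ‖(x1 - τ1⁻¹ • gradient (fun a => H (prodMk a x2)) x1) - y‖ ^ 2 : ℝ) : EReal)
          + f y)
    (hmin2 : ∀ y : EuclideanSpace ℝ (Fin d2),
      ((τ2 / 2 * ‖(x2 - τ2⁻¹ • gradient (fun b => H (prodMk x1 b)) x2) - x2‖ ^ 2 : ℝ) : EReal)
          + g x2 ≤
        ((τ2 / 2 * ‖(x2 - τ2⁻¹ • gradient (fun b => H (prodMk x1 b)) x2) - y‖ ^ 2 : ℝ) : EReal)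
          + g y) :
    GenSubgrad
      (fun p => (H p : EReal) + f ((WithLp.equiv 2 _) p).1 + g ((WithLp.equiv 2 _) p).2)
      (prodMk x1 x2) 0 := by
  have hgradH := hasGradientAt_prodMk_partialGradients
    ((hH.differentiable one_ne_zero (prodMk x1 x2)).hasFDerivAt)
  have hf := (proxSubgrad_of_forall_prox_le hτ1.ne' hmin1).regSubgrad
  have hg := (proxSubgrad_of_forall_prox_le hτ2.ne' hmin2).regSubgrad
  have hF := (hf.prod hg).coe_add_of_hasGradientAt hgradH
  rw [prodMk_neg, add_neg_cancel] at hF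
  simp only [add_assoc]
  exact hF.genSubgrad

/-- if `0` belongs to the generalized gradient `𝒢F_{τ1,τ2}(x1,x2)`, i.e. the
prox fixed point conditions hold, then `(x1,x2)` is a critical point of
`F = H + f + g`: `0 ∈ ∂F(x1,x2)`. -/
theorem generalized_gradient_zero_critical_point (d1 d2 : ℕ)
    (H : WithLp 2 (EuclideanSpace ℝ (Fin d1) × EuclideanSpace ℝ (Fin d2)) → ℝ)
    (hH : ContDiff ℝ 1 H)
    (f : EuclideanSpace ℝ (Fin d1) → EReal)
    (g : EuclideanSpace ℝ (Fin d2) → EReal)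
    (hfbot : ∀ x, f x ≠ ⊥) (hftop : ∃ x, f x ≠ ⊤) (hflsc : LowerSemicontinuous f)
    (hgbot : ∀ x, g x ≠ ⊥) (hgtop : ∃ x, g x ≠ ⊤) (hglsc : LowerSemicontinuous g)
    (τ1 τ2 : ℝ) (hτ1 : 0 < τ1) (hτ2 : 0 < τ2)
    (x1 : EuclideanSpace ℝ (Fin d1)) (x2 : EuclideanSpace ℝ (Fin d2))
    (hmin1 : ∀ y : EuclideanSpace ℝ (Fin d1),
      ((τ1 / 2 * ‖(x1 - τ1⁻¹ • gradient (fun a => H (prodMk a x2)) x1) - x1‖ ^ 2 : ℝ) : EReal)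
          + f x1 ≤
        ((τ1 / 2 * ‖(x1 - τ1⁻¹ • gradient (fun a => H (prodMk a x2)) x1) - y‖ ^ 2 : ℝ) : EReal)
          + f y)
    (hmin2 : ∀ y : EuclideanSpace ℝ (Fin d2),
      ((τ2 / 2 * ‖(x2 - τ2⁻¹ • gradient (fun b => H (prodMk x1 b)) x2) - x2‖ ^ 2 : ℝ) : EReal)
          + g x2 ≤
        ((τ2 / 2 * ‖(x2 - τ2⁻¹ • gradient (fun b => H (prodMk x1 b)) x2) - y‖ ^ 2 : ℝ) : EReal)
          + g y) :
    GenSubgrad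
      (fun p => (H p : EReal) + f ((WithLp.equiv 2 _) p).1 + g ((WithLp.equiv 2 _) p).2)
      (prodMk x1 x2) 0 :=
  generalized_gradient_zero_critical_point_general d1 d2 H hH f g τ1 τ2 hτ1 hτ2 x1 x2 hmin1 hmin2
end

section
/- (Sufficient decrease of PALM.) Let F(x1,x2) = H(x1,x2) + f(x1) + g(x2) with inf F > −∞, where f, g are proper, lower semicontinuous and bounded below, H is continuously differentiable, for every x2 the map x1 ↦ ∇_{x1}H(x1,x2) is globally L1(x2)-Lipschitz, and for every x1 the map x2 ↦ ∇_{x2}H(x1,x2) is globally L2(x1)-Lipschitz. Let (x1^k, x2^k)_k be generated by PALM: x1^{k+1} ∈ prox_{τ1^k}^f( x1^k − (1/τ1^k)∇_{x1}H(x1^k, x2^k) ) and x2^{k+1} ∈ prox_{τ2^k}^g( x2^k − (1/τ2^k)∇_{x2}H(x1^{k+1}, x2^k) ), with step sizes τ1^k ≥ γ1 L1(x2^k) and τ2^k ≥ γ2 L2(x1^{k+1}) for some γ1, γ2 > 1, and suppose L1(x2^k) ≥ λ1⁻ > 0 and L2(x1^{k+1}) ≥ λ2⁻ > 0 for all k.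 Then with η = min{(γ1−1)λ1⁻, (γ2−1)λ2⁻}, the sequence (F(x1^k,x2^k))_k is nonincreasing and (η/2)‖(x1^{k+1},x2^{k+1}) − (x1^k,x2^k)‖² ≤ F(x1^k,x2^k) − F(x1^{k+1},x2^{k+1}) for all k. -/
/-!
Each half-step of PALM is a proximal gradient step on a function whose gradient is Lipschitz.
The descent lemma bounds the smooth part by its linearisation plus `L/2 ‖x⁺ - x‖²`, while
comparing the proximal minimiser `x⁺` with the old point `x` bounds the linearisation plus
`f x⁺` by `f x - τ/2 ‖x⁺ - x‖²`; so each half-step lowers the objective by at least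
`(τ - L)/2 ‖x⁺ - x‖² ≥ η/2 ‖x⁺ - x‖²`, and the two half-steps add up.
-/

open NNReal InnerProductSpace

section ProxGradient

variable {E : Type*} [NormedAddCommGroup E] [InnerProductSpace ℝ E]

theorem le_add_inner_gradient_add_of_lipschitzWith_gradient [CompleteSpace E] {φ : E → ℝ}
    {K : ℝ≥0} (hφ : Differentiable ℝ φ) (hK : LipschitzWith K (gradient φ)) (x y : E) :
    φ y ≤ φ x + ⟪gradient φ x, y - x⟫_ℝ + K / 2 * ‖y - x‖ ^ 2 := by
  set v := y - x
  let ψ : ℝ → ℝ := fun t => φ (x + t • v) - t * ⟪gradient φ x, v⟫_ℝ - K / 2 * t ^ 2 * ‖v‖ ^ 2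
  let ψ' : ℝ → ℝ := fun t => ⟪gradient φ (x + t • v) - gradient φ x, v⟫_ℝ - K * t * ‖v‖ ^ 2
  have hψ (t : ℝ) : HasDerivAt ψ (ψ' t) t := by
    have hline : HasDerivAt (fun t : ℝ => x + t • v) v t := by
      simpa using ((hasDerivAt_id t).smul_const v).const_add x
    have hφt := (hφ _).hasFDerivAt.comp_hasDerivAt t hline
    rw [← inner_gradient_left] at hφt
    refine ((hφt.sub ((hasDerivAt_id t).mul_const _)).sub
      (((hasDerivAt_pow 2 t).const_mul (K / 2 : ℝ)).mul_const (‖v‖ ^ 2))).congr_deriv ?_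
    simp only [ψ', inner_sub_left]
    push_cast
    ring
  have hψ'_nonpos (t : ℝ) (ht : 0 ≤ t) : ψ' t ≤ 0 := by
    have hgrad : ‖gradient φ (x + t • v) - gradient φ x‖ ≤ K * (t * ‖v‖) := by
      simpa [← dist_eq_norm, norm_smul, abs_of_nonneg ht] using hK.dist_le_mul (x + t • v) x
    calc ψ' t ≤ ‖gradient φ (x + t • v) - gradient φ x‖ * ‖v‖ - K * t * ‖v‖ ^ 2 :=
          sub_le_sub_right (real_inner_le_norm _ _) _
      _ ≤ K * (t * ‖v‖) * ‖v‖ - K * t * ‖v‖ ^ 2 := by gcongr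
      _ = 0 := by ring
  have hanti : AntitoneOn ψ (Set.Ici 0) :=
    antitoneOn_of_hasDerivWithinAt_nonpos (convex_Ici 0)
      (fun t _ => (hψ t).continuousAt.continuousWithinAt)
      (fun t _ => (hψ t).hasDerivWithinAt)
      (fun t ht => hψ'_nonpos t (interior_subset ht))
  have h01 := hanti Set.self_mem_Ici (Set.mem_Ici.2 zero_le_one) zero_le_one
  simp only [ψ, v, one_smul, zero_smul, add_zero, add_sub_cancel] at h01
  linarith

theorem sq_add_inner_add_le_of_forall_prox_le {f : E → EReal} {τ : ℝ} (hτ : τ ≠ 0)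
    {x x' G : E}
    (hprox : ∀ y, ((τ / 2 * ‖(x - τ⁻¹ • G) - x'‖ ^ 2 : ℝ) : EReal) + f x' ≤
      ((τ / 2 * ‖(x - τ⁻¹ • G) - y‖ ^ 2 : ℝ) : EReal) + f y) :
    ((τ / 2 * ‖x' - x‖ ^ 2 + ⟪G, x' - x⟫_ℝ : ℝ) : EReal) + f x' ≤ f x := by
  have hexpand : τ / 2 * ‖(x - τ⁻¹ • G) - x'‖ ^ 2 =
      τ / 2 * ‖τ⁻¹ • G‖ ^ 2 + (τ / 2 * ‖x' - x‖ ^ 2 + ⟪G, x' - x⟫_ℝ) := by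
    rw [show (x - τ⁻¹ • G) - x' = -((x' - x) + τ⁻¹ • G) by module, norm_neg,
      norm_add_sq_real, real_inner_smul_right, real_inner_comm]
    field_simp
    ring
  have h := hprox x
  rw [hexpand, show (x - τ⁻¹ • G) - x = -(τ⁻¹ • G) by module, norm_neg, EReal.coe_add,
    add_assoc] at h
  exact (EReal.addLECancellable_coe _).add_le_add_iff_left.1 h

theorem add_add_sq_le_of_forall_prox_gradient_le [CompleteSpace E] {φ : E → ℝ} {K : ℝ≥0}
    (hφ : Differentiable ℝ φ) (hK : LipschitzWith K (gradient φ)) {f : E → EReal} {τ c : ℝ}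
    (hτ : τ ≠ 0) (hc : c ≤ τ - K) {x x' : E}
    (hprox : ∀ y, ((τ / 2 * ‖(x - τ⁻¹ • gradient φ x) - x'‖ ^ 2 : ℝ) : EReal) + f x' ≤
      ((τ / 2 * ‖(x - τ⁻¹ • gradient φ x) - y‖ ^ 2 : ℝ) : EReal) + f y) :
    (φ x' : EReal) + f x' + ((c / 2 * ‖x' - x‖ ^ 2 : ℝ) : EReal) ≤ (φ x : EReal) + f x := by
  set q := τ / 2 * ‖x' - x‖ ^ 2 + ⟪gradient φ x, x' - x⟫_ℝ with hq
  have hdescent : φ x' + c / 2 * ‖x' - x‖ ^ 2 ≤ φ x + q := by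
    have : c / 2 * ‖x' - x‖ ^ 2 ≤ (τ - K) / 2 * ‖x' - x‖ ^ 2 := by gcongr
    linarith [le_add_inner_gradient_add_of_lipschitzWith_gradient hφ hK x x', hq]
  calc (φ x' : EReal) + f x' + ((c / 2 * ‖x' - x‖ ^ 2 : ℝ) : EReal)
      = ((φ x' + c / 2 * ‖x' - x‖ ^ 2 : ℝ) : EReal) + f x' := by rw [EReal.coe_add]; abel
    _ ≤ ((φ x + q : ℝ) : EReal) + f x' := by gcongr
    _ = (φ x : EReal) + ((q : EReal) + f x') := by rw [EReal.coe_add, add_assoc]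
    _ ≤ (φ x : EReal) + f x := by gcongr; exact sq_add_inner_add_le_of_forall_prox_le hτ hprox

end ProxGradient

theorem add_add_add_le_of_alternating {α : Type*} [AddCommMonoid α] [PartialOrder α]
    [IsOrderedAddMonoid α] {h₀ h₁ h₂ u u' v v' c₁ c₂ : α}
    (h₁₀ : h₁ + u' + c₁ ≤ h₀ + u) (h₂₁ : h₂ + v' + c₂ ≤ h₁ + v) :
    h₂ + u' + v' + (c₁ + c₂) ≤ h₀ + u + v :=
  calc h₂ + u' + v' + (c₁ + c₂) = (h₂ + v' + c₂) + (u' + c₁) := by abel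
    _ ≤ (h₁ + v) + (u' + c₁) := by gcongr
    _ = (h₁ + u' + c₁) + v := by abel
    _ ≤ h₀ + u + v := by gcongr

theorem pos_and_sub_one_mul_le_sub_toNNReal {γ lam L τ : ℝ} (hγ : 1 < γ) (hlam : 0 < lam)
    (hL : lam ≤ L) (hτ : γ * L ≤ τ) : 0 < τ ∧ (γ - 1) * lam ≤ τ - L.toNNReal := by
  rw [Real.coe_toNNReal _ (hlam.le.trans hL)]
  constructor <;> nlinarith

theorem palm_sufficient_decrease_general (d1 d2 : ℕ)
    (H : EuclideanSpace ℝ (Fin d1) × EuclideanSpace ℝ (Fin d2) → ℝ)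
    (hH : ContDiff ℝ 1 H)
    (f : EuclideanSpace ℝ (Fin d1) → EReal)
    (g : EuclideanSpace ℝ (Fin d2) → EReal)
    (F : EuclideanSpace ℝ (Fin d1) × EuclideanSpace ℝ (Fin d2) → EReal)
    (hF : ∀ p, F p = (H p : EReal) + f p.1 + g p.2)
    -- partial Lipschitz constants
    (L1 : EuclideanSpace ℝ (Fin d2) → ℝ) (L2 : EuclideanSpace ℝ (Fin d1) → ℝ)
    (hL1 : ∀ b, LipschitzWith (L1 b).toNNReal
      (fun a => gradient (fun a' => H (a', b)) a))
    (hL2 : ∀ a, LipschitzWith (L2 a).toNNReal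
      (fun b => gradient (fun b' => H (a, b')) b))
    -- the PALM iterates
    (x1 : ℕ → EuclideanSpace ℝ (Fin d1)) (x2 : ℕ → EuclideanSpace ℝ (Fin d2))
    (τ1 τ2 : ℕ → ℝ)
    (hstep1 : ∀ k, ∀ y : EuclideanSpace ℝ (Fin d1),
      ((τ1 k / 2 *
          ‖(x1 k - (τ1 k)⁻¹ • gradient (fun a => H (a, x2 k)) (x1 k)) - x1 (k+1)‖ ^ 2 : ℝ)
        : EReal) + f (x1 (k+1)) ≤
      ((τ1 k / 2 *
          ‖(x1 k - (τ1 k)⁻¹ • gradient (fun a => H (a, x2 k)) (x1 k)) - y‖ ^ 2 : ℝ)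
        : EReal) + f y)
    (hstep2 : ∀ k, ∀ y : EuclideanSpace ℝ (Fin d2),
      ((τ2 k / 2 *
          ‖(x2 k - (τ2 k)⁻¹ • gradient (fun b => H (x1 (k+1), b)) (x2 k)) - x2 (k+1)‖ ^ 2 : ℝ)
        : EReal) + g (x2 (k+1)) ≤
      ((τ2 k / 2 *
          ‖(x2 k - (τ2 k)⁻¹ • gradient (fun b => H (x1 (k+1), b)) (x2 k)) - y‖ ^ 2 : ℝ)
        : EReal) + g y)
    -- step size conditions
    (γ1 γ2 : ℝ) (hγ1 : 1 < γ1) (hγ2 : 1 < γ2)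
    (hτ1 : ∀ k, γ1 * L1 (x2 k) ≤ τ1 k)
    (hτ2 : ∀ k, γ2 * L2 (x1 (k+1)) ≤ τ2 k)
    (lam1 lam2 : ℝ) (hlam1 : 0 < lam1) (hlam2 : 0 < lam2)
    (hL1low : ∀ k, lam1 ≤ L1 (x2 k))
    (hL2low : ∀ k, lam2 ≤ L2 (x1 (k+1)))
    (η : ℝ) (hη : η = min ((γ1 - 1) * lam1) ((γ2 - 1) * lam2)) :
    (∀ k, F (x1 (k+1), x2 (k+1)) ≤ F (x1 k, x2 k)) ∧
    (∀ k, F (x1 (k+1), x2 (k+1)) +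
        ((η / 2 * (‖x1 (k+1) - x1 k‖ ^ 2 + ‖x2 (k+1) - x2 k‖ ^ 2) : ℝ) : EReal) ≤
      F (x1 k, x2 k)) := by
  have key (k : ℕ) : F (x1 (k+1), x2 (k+1)) +
      ((η / 2 * (‖x1 (k+1) - x1 k‖ ^ 2 + ‖x2 (k+1) - x2 k‖ ^ 2) : ℝ) : EReal) ≤
        F (x1 k, x2 k) := by
    obtain ⟨hτ1pos, hgap1⟩ := pos_and_sub_one_mul_le_sub_toNNReal hγ1 hlam1 (hL1low k) (hτ1 k)
    obtain ⟨hτ2pos, hgap2⟩ := pos_and_sub_one_mul_le_sub_toNNReal hγ2 hlam2 (hL2low k) (hτ2 k)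
    have hH' := hH.differentiable one_ne_zero
    have e1 := add_add_sq_le_of_forall_prox_gradient_le
      (hH'.comp (differentiable_id.prodMk (differentiable_const _))) (hL1 (x2 k))
      hτ1pos.ne' ((hη ▸ min_le_left _ _).trans hgap1) (hstep1 k)
    have e2 := add_add_sq_le_of_forall_prox_gradient_le
      (hH'.comp ((differentiable_const _).prodMk differentiable_id)) (hL2 (x1 (k+1)))
      hτ2pos.ne' ((hη ▸ min_le_right _ _).trans hgap2) (hstep2 k)
    rw [hF, hF, mul_add, EReal.coe_add]
    exact add_add_add_le_of_alternating e1 e2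
  have hη0 : 0 ≤ η := by rw [hη]; apply le_min <;> nlinarith
  exact ⟨fun k => le_trans (le_add_of_nonneg_right (EReal.coe_nonneg.2 (by positivity))) (key k),
    key⟩

/-- sufficient decrease of PALM. -/
theorem palm_sufficient_decrease (d1 d2 : ℕ)
    (H : EuclideanSpace ℝ (Fin d1) × EuclideanSpace ℝ (Fin d2) → ℝ)
    (hH : ContDiff ℝ 1 H)
    (f : EuclideanSpace ℝ (Fin d1) → EReal)
    (g : EuclideanSpace ℝ (Fin d2) → EReal)
    (hfbot : ∀ x, f x ≠ ⊥) (hftop : ∃ x, f x ≠ ⊤) (hflsc : LowerSemicontinuous f)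
    (hfbdd : ∃ c : ℝ, ∀ x, (c : EReal) ≤ f x)
    (hgbot : ∀ x, g x ≠ ⊥) (hgtop : ∃ x, g x ≠ ⊤) (hglsc : LowerSemicontinuous g)
    (hgbdd : ∃ c : ℝ, ∀ x, (c : EReal) ≤ g x)
    (F : EuclideanSpace ℝ (Fin d1) × EuclideanSpace ℝ (Fin d2) → EReal)
    (hF : ∀ p, F p = (H p : EReal) + f p.1 + g p.2)
    (hFbdd : ∃ c : ℝ, ∀ p, (c : EReal) ≤ F p)
    -- partial Lipschitz constants
    (L1 : EuclideanSpace ℝ (Fin d2) → ℝ) (L2 : EuclideanSpace ℝ (Fin d1) → ℝ)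
    (hL1 : ∀ b, LipschitzWith (L1 b).toNNReal
      (fun a => gradient (fun a' => H (a', b)) a))
    (hL2 : ∀ a, LipschitzWith (L2 a).toNNReal
      (fun b => gradient (fun b' => H (a, b')) b))
    -- the PALM iterates
    (x1 : ℕ → EuclideanSpace ℝ (Fin d1)) (x2 : ℕ → EuclideanSpace ℝ (Fin d2))
    (τ1 τ2 : ℕ → ℝ)
    (hstep1 : ∀ k, ∀ y : EuclideanSpace ℝ (Fin d1),
      ((τ1 k / 2 *
          ‖(x1 k - (τ1 k)⁻¹ • gradient (fun a => H (a, x2 k)) (x1 k)) - x1 (k+1)‖ ^ 2 : ℝ)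
        : EReal) + f (x1 (k+1)) ≤
      ((τ1 k / 2 *
          ‖(x1 k - (τ1 k)⁻¹ • gradient (fun a => H (a, x2 k)) (x1 k)) - y‖ ^ 2 : ℝ)
        : EReal) + f y)
    (hstep2 : ∀ k, ∀ y : EuclideanSpace ℝ (Fin d2),
      ((τ2 k / 2 *
          ‖(x2 k - (τ2 k)⁻¹ • gradient (fun b => H (x1 (k+1), b)) (x2 k)) - x2 (k+1)‖ ^ 2 : ℝ)
        : EReal) + g (x2 (k+1)) ≤
      ((τ2 k / 2 *
          ‖(x2 k - (τ2 k)⁻¹ • gradient (fun b => H (x1 (k+1), b)) (x2 k)) - y‖ ^ 2 : ℝ)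
        : EReal) + g y)
    -- step size conditions
    (γ1 γ2 : ℝ) (hγ1 : 1 < γ1) (hγ2 : 1 < γ2)
    (hτ1 : ∀ k, γ1 * L1 (x2 k) ≤ τ1 k)
    (hτ2 : ∀ k, γ2 * L2 (x1 (k+1)) ≤ τ2 k)
    (lam1 lam2 : ℝ) (hlam1 : 0 < lam1) (hlam2 : 0 < lam2)
    (hL1low : ∀ k, lam1 ≤ L1 (x2 k))
    (hL2low : ∀ k, lam2 ≤ L2 (x1 (k+1)))
    (η : ℝ) (hη : η = min ((γ1 - 1) * lam1) ((γ2 - 1) * lam2)) :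
    (∀ k, F (x1 (k+1), x2 (k+1)) ≤ F (x1 k, x2 k)) ∧
    (∀ k, F (x1 (k+1), x2 (k+1)) +
        ((η / 2 * (‖x1 (k+1) - x1 k‖ ^ 2 + ‖x2 (k+1) - x2 k‖ ^ 2) : ℝ) : EReal) ≤
      F (x1 k, x2 k)) :=
  palm_sufficient_decrease_general d1 d2 H hH f g F hF L1 L2 hL1 hL2 x1 x2 τ1 τ2 hstep1 hstep2 γ1 γ2
    hγ1 hγ2 hτ1 hτ2 lam1 lam2 hlam1 hlam2 hL1low hL2low η hη
end

section
/- Let ψ = σ + h, where h : ℝ^d → ℝ is continuously differentiable with L_h-Lipschitz gradient and σ : ℝ^d → (−∞,∞] is proper, lower semicontinuous with inf σ > −∞. Let t > 0, let u, v ∈ ℝ^d, let G ∈ ℝ^d be an arbitrary vector (a gradient estimate), and let u⁺ be a minimizer over y of (t/2)‖(v − (1/t)G) − y‖² + σ(y). Then ψ(u⁺) ≤ ψ(u) + ⟨u⁺ − u, ∇h(u) − G⟩ + (L_h/2)‖u − u⁺‖² + (t/2)‖u − v‖² − (t/2)‖u⁺ − v‖². -/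
open Filter Topology

section Aux
variable {d : ℕ}

/-- Descent lemma for Lipschitz gradient. -/
lemma descent_lemma (h : EuclideanSpace ℝ (Fin d) → ℝ) (hh : ContDiff ℝ 1 h)
    (Lh : ℝ) (hLh : 0 ≤ Lh) (hLip : LipschitzWith Lh.toNNReal (gradient h))
    (u w : EuclideanSpace ℝ (Fin d)) :
    h (u + w) ≤ h u + (inner ℝ (gradient h u) w : ℝ) + Lh / 2 * ‖w‖ ^ 2 := by
  have hdiff : ∀ x : EuclideanSpace ℝ (Fin d),
      HasFDerivAt h ((InnerProductSpace.toDual ℝ (EuclideanSpace ℝ (Fin d))) (gradient h x)) x :=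
    fun x => ((hh.differentiable one_ne_zero x).hasGradientAt).hasFDerivAt
  have hc : ∀ s : ℝ, HasDerivAt (fun s : ℝ => u + s • w) w s := by
    intro s
    simpa using ((hasDerivAt_id s).smul_const w).const_add u
  have hf' : ∀ s : ℝ, HasDerivAt
      (fun s : ℝ => h (u + s • w) - s * (inner ℝ (gradient h u) w : ℝ))
      ((inner ℝ (gradient h (u + s • w)) w : ℝ) - (inner ℝ (gradient h u) w : ℝ)) s := by
    intro s
    have h1 : HasDerivAt (fun s : ℝ => h (u + s • w))
        ((InnerProductSpace.toDual ℝ (EuclideanSpace ℝ (Fin d))) (gradient h (u + s • w)) w) s :=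
      (hdiff (u + s • w)).comp_hasDerivAt s (hc s)
    simp only [InnerProductSpace.toDual_apply_apply] at h1
    exact h1.sub (hasDerivAt_mul_const _)
  have hB' : ∀ s : ℝ, HasDerivAt (fun s : ℝ => h u + Lh / 2 * ‖w‖ ^ 2 * s ^ 2)
      (Lh * ‖w‖ ^ 2 * s) s := by
    intro s
    have h2 : HasDerivAt (fun s : ℝ => h u + Lh / 2 * ‖w‖ ^ 2 * s ^ 2)
        (Lh / 2 * ‖w‖ ^ 2 * (2 * s)) s := by
      have : HasDerivAt (fun s : ℝ => s ^ 2) (2 * s) s := by simpa using hasDerivAt_pow 2 s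
      exact (this.const_mul (Lh / 2 * ‖w‖ ^ 2)).const_add (h u)
    convert h2 using 1
    ring
  have key : ∀ x ∈ Set.Icc (0:ℝ) 1,
      h (u + x • w) - x * (inner ℝ (gradient h u) w : ℝ) ≤ h u + Lh / 2 * ‖w‖ ^ 2 * x ^ 2 := by
    refine image_le_of_deriv_right_le_deriv_boundary
      (f' := fun s => (inner ℝ (gradient h (u + s • w)) w : ℝ) - (inner ℝ (gradient h u) w : ℝ))
      (B' := fun s => Lh * ‖w‖ ^ 2 * s)
      (fun s _ => (hf' s).continuousAt.continuousWithinAt)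
      (fun s _ => (hf' s).hasDerivWithinAt)
      (by simp)
      (fun s _ => (hB' s).continuousAt.continuousWithinAt)
      (fun s _ => (hB' s).hasDerivWithinAt)
      ?_
    intro s hs
    have h3 : (inner ℝ (gradient h (u + s • w)) w : ℝ) - (inner ℝ (gradient h u) w : ℝ)
        = (inner ℝ (gradient h (u + s • w) - gradient h u) w : ℝ) := by
      rw [inner_sub_left]
    rw [h3]
    calc (inner ℝ (gradient h (u + s • w) - gradient h u) w : ℝ)
        ≤ ‖gradient h (u + s • w) - gradient h u‖ * ‖w‖ := real_inner_le_norm _ _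
      _ ≤ Lh * ‖s • w‖ * ‖w‖ := by
          have h4 := hLip.dist_le_mul (u + s • w) u
          rw [Real.coe_toNNReal _ hLh] at h4
          have h5 : dist (u + s • w) u = ‖s • w‖ := by simp [dist_eq_norm]
          rw [h5, dist_eq_norm] at h4
          exact mul_le_mul_of_nonneg_right h4 (norm_nonneg w)
      _ = Lh * ‖w‖ ^ 2 * s := by
          rw [norm_smul, Real.norm_eq_abs, abs_of_nonneg hs.1]
          ring
  have hk := key 1 (by norm_num)
  simp only [one_smul, one_mul, one_pow, mul_one] at hk
  linarith
end Aux

/-- the proximal inequality for `ψ = σ + h` with an inexact gradient `G`.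
The hypothesis `hmin` says `u⁺ ∈ prox_t^σ (v - (1/t) G)`. -/
theorem prox_inequality_inexact_gradient (d : ℕ)
    (σ : EuclideanSpace ℝ (Fin d) → EReal)
    (hσbot : ∀ x, σ x ≠ ⊥) (hσtop : ∃ x, σ x ≠ ⊤) (hσlsc : LowerSemicontinuous σ)
    (hσbdd : ∃ c : ℝ, ∀ x, (c : EReal) ≤ σ x)
    (h : EuclideanSpace ℝ (Fin d) → ℝ) (hh : ContDiff ℝ 1 h)
    (Lh : ℝ) (hLh : 0 ≤ Lh) (hLip : LipschitzWith Lh.toNNReal (gradient h))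
    (t : ℝ) (ht : 0 < t)
    (u v G uplus : EuclideanSpace ℝ (Fin d))
    (hmin : ∀ y : EuclideanSpace ℝ (Fin d),
      ((t / 2 * ‖(v - t⁻¹ • G) - uplus‖ ^ 2 : ℝ) : EReal) + σ uplus ≤
        ((t / 2 * ‖(v - t⁻¹ • G) - y‖ ^ 2 : ℝ) : EReal) + σ y) :
    σ uplus + ((h uplus : ℝ) : EReal) ≤
      σ u + ((h u + (inner ℝ (uplus - u) (gradient h u - G) : ℝ)
        + Lh / 2 * ‖u - uplus‖ ^ 2
        + t / 2 * ‖u - v‖ ^ 2 - t / 2 * ‖uplus - v‖ ^ 2 : ℝ) : EReal) := by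
  classical
  -- σ uplus is finite
  obtain ⟨x₀, hx₀⟩ := hσtop
  have htop : σ uplus ≠ ⊤ := by
    intro hT
    have h0 := hmin x₀
    rw [hT, EReal.add_top_of_ne_bot (EReal.coe_ne_bot _), top_le_iff] at h0
    obtain ⟨c, hc⟩ : ∃ c : ℝ, σ x₀ = (c : EReal) :=
      ⟨(σ x₀).toReal, (EReal.coe_toReal hx₀ (hσbot x₀)).symm⟩
    rw [hc, ← EReal.coe_add] at h0
    exact EReal.coe_ne_top _ h0
  obtain ⟨a, ha⟩ : ∃ a : ℝ, σ uplus = (a : EReal) :=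
    ⟨(σ uplus).toReal, (EReal.coe_toReal htop (hσbot uplus)).symm⟩
  by_cases hu : σ u = ⊤
  · rw [hu, ha]
    rw [← EReal.coe_add]
    exact le_top.trans_eq (by rw [EReal.top_add_coe])
  obtain ⟨b, hb⟩ : ∃ b : ℝ, σ u = (b : EReal) :=
    ⟨(σ u).toReal, (EReal.coe_toReal hu (hσbot u)).symm⟩
  -- real form of hmin at u
  have hreal : t / 2 * ‖(v - t⁻¹ • G) - uplus‖ ^ 2 + a ≤ t / 2 * ‖(v - t⁻¹ • G) - u‖ ^ 2 + b := by
    have := hmin u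
    rw [ha, hb, ← EReal.coe_add, ← EReal.coe_add, EReal.coe_le_coe_iff] at this
    exact this
  -- descent lemma
  have hdesc : h uplus ≤ h u + (inner ℝ (gradient h u) (uplus - u) : ℝ)
      + Lh / 2 * ‖uplus - u‖ ^ 2 := by
    have := descent_lemma h hh Lh hLh hLip u (uplus - u)
    simpa using this
  -- norm expansion identity
  have hexp : t / 2 * ‖(v - t⁻¹ • G) - u‖ ^ 2 - t / 2 * ‖(v - t⁻¹ • G) - uplus‖ ^ 2
      = t / 2 * ‖u - v‖ ^ 2 - t / 2 * ‖uplus - v‖ ^ 2 - (inner ℝ (uplus - u) G : ℝ) := by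
    have e1 : (v - t⁻¹ • G) - u = (v - u) - t⁻¹ • G := by abel
    have e2 : (v - t⁻¹ • G) - uplus = (v - uplus) - t⁻¹ • G := by abel
    rw [e1, e2, show ‖u - v‖ = ‖v - u‖ from norm_sub_rev u v,
      show ‖uplus - v‖ = ‖v - uplus‖ from norm_sub_rev uplus v,
      norm_sub_sq_real (v - u) (t⁻¹ • G), norm_sub_sq_real (v - uplus) (t⁻¹ • G)]
    simp only [real_inner_smul_right, inner_sub_left]
    have htne : t ≠ 0 := ne_of_gt ht
    field_simp
    ring
  -- combine in reals
  have hfinal : a + h uplus ≤ b + (h u + (inner ℝ (uplus - u) (gradient h u - G) : ℝ)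
      + Lh / 2 * ‖u - uplus‖ ^ 2 + t / 2 * ‖u - v‖ ^ 2 - t / 2 * ‖uplus - v‖ ^ 2) := by
    have hnorm : ‖u - uplus‖ = ‖uplus - u‖ := norm_sub_rev _ _
    have hinner : (inner ℝ (uplus - u) (gradient h u - G) : ℝ)
        = (inner ℝ (gradient h u) (uplus - u) : ℝ) - (inner ℝ (uplus - u) G : ℝ) := by
      rw [inner_sub_right, real_inner_comm (uplus - u) (gradient h u)]
    rw [hinner, hnorm]
    linarith
  rw [ha, hb, ← EReal.coe_add, ← EReal.coe_add, EReal.coe_le_coe_iff]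
  exact hfinal
end

section
/- (One-step variance recursion of the SARAH estimator.) Let h_1,…,h_n : ℝ^D → ℝ be continuously differentiable and H = (1/n)Σ_{j=1}^n h_j. Fix points z, z' ∈ ℝ^D, a vector G' ∈ ℝ^D, and a batch size 1 ≤ b ≤ n. Let B be a random subset of {1,…,n} drawn uniformly from all subsets of size b, and define the random vector G = (1/b) Σ_{j∈B} ( ∇h_j(z) − ∇h_j(z') ) + G'. Then E( ‖G − ∇H(z)‖² ) ≤ ‖G' − ∇H(z')‖² + (1/n) Σ_{j=1}^n ‖∇h_j(z) − ∇h_j(z')‖². In particular, if every ∇h_j is globally M-Lipschitz, then E( ‖G − ∇H(z)‖² ) ≤ ‖G' − ∇H(z')‖² + M² ‖z − z'‖². -/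
/-!
Write `v j = ∇h_j z - ∇h_j z'` and `c = G' - ∇H z'`. Then `G B - ∇H z = c + (X B - 𝔼 X)`,
where `X B` is the mean of `v` over the batch `B`. The batch mean is unbiased, `𝔼 X = 𝔼 v`,
since every index lies in exactly `C(n - 1, b - 1)` batches. Hence the cross term with `c`
averages out and `𝔼 ‖G - ∇H z‖² = ‖c‖² + 𝔼 ‖X‖² - ‖𝔼 X‖² ≤ ‖c‖² + 𝔼 ‖X‖²`; finally
`‖X B‖²` is at most the batch mean of `‖v j‖²` (Jensen), whose average over all batches is
again `𝔼 ‖v‖²` by unbiasedness.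
-/

open Finset
open scoped BigOperators InnerProductSpace

namespace Finset

variable {ι M : Type*}

lemma expect_eq_inv_card_smul_sum (K : Type*) [DivisionSemiring K] [CharZero K]
    [AddCommMonoid M] [Module K M] [Module ℚ≥0 M] (s : Finset ι) (f : ι → M) :
    𝔼 i ∈ s, f i = (#s : K)⁻¹ • ∑ i ∈ s, f i := by
  rw [expect, ← NNRat.cast_smul_eq_nnqsmul K, NNRat.cast_inv, NNRat.cast_natCast]

lemma card_filter_mem_powersetCard [DecidableEq ι] {s : Finset ι} {b : ℕ} {j : ι}
    (hj : j ∈ s) (hb : 1 ≤ b) :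
    #{B ∈ s.powersetCard b | j ∈ B} = (#s - 1).choose (b - 1) := by
  simpa using card_filter_powersetCard_subset {j} s b (singleton_subset_iff.2 hj) (by simpa)

lemma sum_powersetCard_sum [AddCommMonoid M] (s : Finset ι) {b : ℕ} (hb : 1 ≤ b)
    (f : ι → M) :
    ∑ B ∈ s.powersetCard b, ∑ j ∈ B, f j = (#s - 1).choose (b - 1) • ∑ j ∈ s, f j := by
  classical
  rw [sum_comm' (t' := s) (s' := fun j ↦ {B ∈ s.powersetCard b | j ∈ B}), smul_sum]
  · refine sum_congr rfl fun j hj ↦ ?_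
    rw [sum_const, card_filter_mem_powersetCard hj hb]
  · intro B j
    simp only [mem_filter, mem_powersetCard]
    exact ⟨fun h ↦ ⟨⟨h.1, h.2⟩, h.1.1 h.2⟩, fun h ↦ ⟨h.1.1, h.1.2⟩⟩

lemma expect_powersetCard_expect [AddCommMonoid M] [Module ℚ≥0 M] {s : Finset ι} {b : ℕ}
    (hb : 1 ≤ b) (hbs : b ≤ #s) (f : ι → M) :
    𝔼 B ∈ s.powersetCard b, 𝔼 j ∈ B, f j = 𝔼 j ∈ s, f j := by
  have hB : ∀ B ∈ s.powersetCard b, 𝔼 j ∈ B, f j = (b : ℚ≥0)⁻¹ • ∑ j ∈ B, f j :=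
    fun B hB ↦ by rw [expect, (mem_powersetCard.1 hB).2]
  rw [expect_congr rfl hB, ← smul_expect, expect, sum_powersetCard_sum s hb, card_powersetCard,
    expect, ← Nat.cast_smul_eq_nsmul ℚ≥0, smul_smul, smul_smul]
  congr 1
  obtain ⟨m, hm⟩ : ∃ m, #s = m + 1 := ⟨#s - 1, by omega⟩
  obtain ⟨k, rfl⟩ : ∃ k, b = k + 1 := ⟨b - 1, by omega⟩
  have hchoose := Nat.add_one_mul_choose_eq m k
  have hpos : (0 : ℚ≥0) < (m + 1).choose (k + 1) := by exact_mod_cast Nat.choose_pos (by omega)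
  rw [hm, Nat.add_sub_cancel, Nat.add_sub_cancel]
  field_simp
  exact_mod_cast by rw [mul_comm, hchoose, mul_comm]

end Finset

section InnerProductSpace

variable {ι E : Type*} [NormedAddCommGroup E] [InnerProductSpace ℝ E] [Module ℚ≥0 E]
  (s : Finset ι) (f : ι → E)

lemma expect_inner (y : E) : ⟪𝔼 i ∈ s, f i, y⟫_ℝ = 𝔼 i ∈ s, ⟪f i, y⟫_ℝ := by
  rw [expect_eq_inv_card_smul_sum ℝ, expect_eq_inv_card_smul_sum ℝ, real_inner_smul_left,
    sum_inner, smul_eq_mul]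

lemma expect_norm_sub_expect_sq (hs : s.Nonempty) :
    𝔼 i ∈ s, ‖f i - 𝔼 j ∈ s, f j‖ ^ 2 = 𝔼 i ∈ s, ‖f i‖ ^ 2 - ‖𝔼 i ∈ s, f i‖ ^ 2 := by
  simp_rw [norm_sub_sq_real, expect_add_distrib, expect_sub_distrib, expect_const hs,
    ← mul_expect, ← expect_inner, real_inner_self_eq_norm_sq]
  ring

lemma norm_expect_sq_le_expect_norm_sq (hs : s.Nonempty) :
    ‖𝔼 i ∈ s, f i‖ ^ 2 ≤ 𝔼 i ∈ s, ‖f i‖ ^ 2 := by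
  have hvar := expect_norm_sub_expect_sq s f hs
  have : 0 ≤ 𝔼 i ∈ s, ‖f i - 𝔼 j ∈ s, f j‖ ^ 2 := expect_nonneg fun _ _ ↦ sq_nonneg _
  linarith

lemma expect_norm_add_sq_of_expect_eq_zero (hs : s.Nonempty) (c : E)
    (hf : 𝔼 i ∈ s, f i = 0) :
    𝔼 i ∈ s, ‖c + f i‖ ^ 2 = ‖c‖ ^ 2 + 𝔼 i ∈ s, ‖f i‖ ^ 2 := by
  simp_rw [norm_add_sq_real, expect_add_distrib, expect_const hs, ← mul_expect,
    ← real_inner_comm c, ← expect_inner, hf, inner_zero_left, mul_zero, add_zero]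

lemma expect_norm_add_sub_expect_sq_le (hs : s.Nonempty) (c : E) :
    𝔼 i ∈ s, ‖c + (f i - 𝔼 j ∈ s, f j)‖ ^ 2 ≤ ‖c‖ ^ 2 + 𝔼 i ∈ s, ‖f i‖ ^ 2 := by
  have hcentered : 𝔼 i ∈ s, (f i - 𝔼 j ∈ s, f j) = 0 := by
    rw [expect_sub_distrib, expect_const hs, sub_self]
  rw [expect_norm_add_sq_of_expect_eq_zero s _ hs c hcentered, expect_norm_sub_expect_sq s f hs]
  linarith [sq_nonneg ‖𝔼 i ∈ s, f i‖]

theorem expect_powersetCard_norm_add_sq_le {s : Finset ι} {b : ℕ} (hb : 1 ≤ b)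
    (hbs : b ≤ #s) (v : ι → E) (c : E) :
    𝔼 B ∈ s.powersetCard b, ‖c + (𝔼 j ∈ B, v j - 𝔼 j ∈ s, v j)‖ ^ 2 ≤
      ‖c‖ ^ 2 + 𝔼 j ∈ s, ‖v j‖ ^ 2 := by
  have hB : ∀ B ∈ s.powersetCard b, B.Nonempty := fun B hB ↦
    card_pos.1 ((mem_powersetCard.1 hB).2 ▸ hb)
  calc 𝔼 B ∈ s.powersetCard b, ‖c + (𝔼 j ∈ B, v j - 𝔼 j ∈ s, v j)‖ ^ 2
      = 𝔼 B ∈ s.powersetCard b,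
          ‖c + (𝔼 j ∈ B, v j - 𝔼 B' ∈ s.powersetCard b, 𝔼 j ∈ B', v j)‖ ^ 2 := by
        rw [expect_powersetCard_expect hb hbs]
    _ ≤ ‖c‖ ^ 2 + 𝔼 B ∈ s.powersetCard b, ‖𝔼 j ∈ B, v j‖ ^ 2 :=
        expect_norm_add_sub_expect_sq_le _ _ (powersetCard_nonempty.2 hbs) c
    _ ≤ ‖c‖ ^ 2 + 𝔼 B ∈ s.powersetCard b, 𝔼 j ∈ B, ‖v j‖ ^ 2 := by
        gcongr with B hB'
        exact norm_expect_sq_le_expect_norm_sq B v (hB B hB')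
    _ = ‖c‖ ^ 2 + 𝔼 j ∈ s, ‖v j‖ ^ 2 := by rw [expect_powersetCard_expect hb hbs]

end InnerProductSpace

lemma gradient_const_mul_sum {F ι : Type*} [NormedAddCommGroup F] [InnerProductSpace ℝ F]
    [CompleteSpace F] (s : Finset ι) {h : ι → F → ℝ} {x : F}
    (hd : ∀ j ∈ s, DifferentiableAt ℝ (h j) x) (c : ℝ) :
    gradient (fun p ↦ c * ∑ j ∈ s, h j p) x = c • ∑ j ∈ s, gradient (h j) x := by
  simp only [gradient, fderiv_const_mul (DifferentiableAt.fun_sum hd), fderiv_fun_sum hd,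
    map_smul, map_sum]

lemma LipschitzWith.norm_sub_sq_le {E F : Type*} [SeminormedAddCommGroup E]
    [SeminormedAddCommGroup F] {f : E → F} {M : ℝ} (hf : LipschitzWith M.toNNReal f)
    (x y : E) : ‖f x - f y‖ ^ 2 ≤ M ^ 2 * ‖x - y‖ ^ 2 := by
  have hM : (M.toNNReal : ℝ) ^ 2 ≤ M ^ 2 := by
    rw [← sq_abs M, Real.coe_toNNReal']
    exact pow_le_pow_left₀ (le_max_right _ _) (max_le (le_abs_self M) (abs_nonneg M)) 2
  calc ‖f x - f y‖ ^ 2 ≤ ((M.toNNReal : ℝ) * ‖x - y‖) ^ 2 :=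
        pow_le_pow_left₀ (norm_nonneg _) (hf.norm_sub_le x y) 2
    _ ≤ M ^ 2 * ‖x - y‖ ^ 2 := by rw [mul_pow]; gcongr

/-- one-step variance recursion of the SARAH estimator. The random batch
`B` is uniformly distributed over the size-`b` subsets of `{1,…,n}`, so expectations are
averages over `Finset.powersetCard b Finset.univ`. -/
theorem sarah_one_step_variance (D n b : ℕ) (hb1 : 1 ≤ b) (hbn : b ≤ n)
    (h : Fin n → EuclideanSpace ℝ (Fin D) → ℝ)
    (hC1 : ∀ j, ContDiff ℝ 1 (h j))
    (H : EuclideanSpace ℝ (Fin D) → ℝ)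
    (hH : ∀ p, H p = (1 / n : ℝ) * ∑ j, h j p)
    (z z' G' : EuclideanSpace ℝ (Fin D))
    (G : Finset (Fin n) → EuclideanSpace ℝ (Fin D))
    (hG : ∀ B, G B =
      (1 / b : ℝ) • (∑ j ∈ B, (gradient (h j) z - gradient (h j) z')) + G') :
    ((1 / (n.choose b) : ℝ) *
        ∑ B ∈ Finset.powersetCard b (Finset.univ : Finset (Fin n)),
          ‖G B - gradient H z‖ ^ 2 ≤
      ‖G' - gradient H z'‖ ^ 2 +
        (1 / n : ℝ) * ∑ j, ‖gradient (h j) z - gradient (h j) z'‖ ^ 2) ∧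
    (∀ M : ℝ, (∀ j, LipschitzWith M.toNNReal (gradient (h j))) →
      (1 / (n.choose b) : ℝ) *
          ∑ B ∈ Finset.powersetCard b (Finset.univ : Finset (Fin n)),
            ‖G B - gradient H z‖ ^ 2 ≤
        ‖G' - gradient H z'‖ ^ 2 + M ^ 2 * ‖z - z'‖ ^ 2) := by
  have hcard : #(univ : Finset (Fin n)) = n := card_fin n
  have hgradH : ∀ x, gradient H x = 𝔼 j, gradient (h j) x := fun x ↦ by
    rw [funext hH, gradient_const_mul_sum _ fun j _ ↦
      ((hC1 j).differentiable one_ne_zero).differentiableAt,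
      expect_eq_inv_card_smul_sum ℝ, hcard, one_div]
  set v := fun j ↦ gradient (h j) z - gradient (h j) z'
  have hcentered : ∀ B ∈ powersetCard b univ,
      G B - gradient H z = (G' - gradient H z') + (𝔼 j ∈ B, v j - 𝔼 j, v j) := fun B hB ↦ by
    rw [hG, hgradH, hgradH, expect_eq_inv_card_smul_sum ℝ B, (mem_powersetCard.1 hB).2,
      expect_sub_distrib, one_div]
    abel
  have hvariance : (1 / (n.choose b) : ℝ) *
      ∑ B ∈ powersetCard b univ, ‖G B - gradient H z‖ ^ 2 ≤
        ‖G' - gradient H z'‖ ^ 2 + 𝔼 j, ‖v j‖ ^ 2 := by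
    have hP : #(powersetCard b (univ : Finset (Fin n))) = n.choose b := by simp
    rw [one_div, ← hP, ← smul_eq_mul, ← expect_eq_inv_card_smul_sum ℝ,
      expect_congr rfl fun B hB ↦ by rw [hcentered B hB]]
    exact expect_powersetCard_norm_add_sq_le hb1 (by rwa [hcard]) v _
  refine ⟨?_, fun M hLip ↦ hvariance.trans ?_⟩
  · rwa [expect_eq_inv_card_smul_sum ℝ, hcard, smul_eq_mul, ← one_div] at hvariance
  · have hn : (univ : Finset (Fin n)).Nonempty := card_pos.1 (by omega)
    gcongr
    exact expect_le hn fun j _ ↦ (hLip j).norm_sub_sq_le z z'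
end
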